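/- arXiv:1104.2442 — 9 statements merged into one kernel-verified Lean document; each statement's English description precedes it below -/
import Mathlib

section
/- If α > 2, then there exists a unique x > 0 such that f_α(x) = 0. -/
/-!
With t = x / 2 the half-angle formulas give
f_α(2t) = 2 sinh t · (2t cosh t − α sinh t), so for t > 0 the zeros of f_α are exactly
the solutions of t cosh t / sinh t = α / 2. The function t ↦ t cosh t / sinh t is strictly
increasing on (0, ∞) and squeezed between t and cosh t, so it takes every value above 1
exactly once.
-/

open Real Set Filter Topology

namespace Real

lemma strictMonoOn_mul_cosh_div_sinh :
    StrictMonoOn (fun t => t * cosh t / sinh t) (Ioi 0) := by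
  apply strictMonoOn_of_deriv_pos (convex_Ioi 0)
  · exact (continuous_id.mul continuous_cosh).continuousOn.div continuous_sinh.continuousOn
      fun t ht => (sinh_pos_iff.mpr ht).ne'
  · intro t ht
    rw [interior_Ioi] at ht
    have hsinh : 0 < sinh t := sinh_pos_iff.mpr ht
    have hderiv : HasDerivAt (fun t => t * cosh t / sinh t)
        (((1 * cosh t + t * sinh t) * sinh t - t * cosh t * cosh t) / sinh t ^ 2) t :=
      ((hasDerivAt_id t).mul (hasDerivAt_cosh t)).div (hasDerivAt_sinh t) hsinh.ne'
    rw [hderiv.deriv]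
    have ht_lt : t < sinh t := self_lt_sinh_iff.mpr ht
    have hcosh : 1 < cosh t := one_lt_cosh.mpr ht.ne'
    have := cosh_sq t
    apply div_pos _ (by positivity)
    -- the numerator simplifies to sinh t cosh t − t
    nlinarith

lemma self_lt_mul_cosh_div_sinh {t : ℝ} (ht : 0 < t) : t < t * cosh t / sinh t := by
  rw [lt_div_iff₀ (sinh_pos_iff.mpr ht)]
  nlinarith [self_lt_sinh_iff.mpr ht, sinh_lt_cosh t]

lemma mul_cosh_div_sinh_lt_cosh {t : ℝ} (ht : 0 < t) : t * cosh t / sinh t < cosh t := by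
  rw [div_lt_iff₀ (sinh_pos_iff.mpr ht)]
  nlinarith [self_lt_sinh_iff.mpr ht, cosh_pos t]

lemma existsUnique_pos_mul_cosh_div_sinh_eq {c : ℝ} (hc : 1 < c) :
    ∃! t : ℝ, 0 < t ∧ t * cosh t / sinh t = c := by
  have hcosh : ∀ᶠ a in 𝓝[>] 0, cosh a < c :=
    ((continuous_cosh.tendsto 0).mono_left nhdsWithin_le_nhds).eventually_lt_const
      (by rwa [cosh_zero])
  obtain ⟨a, ha_cosh, ha⟩ := (hcosh.and self_mem_nhdsWithin).exists
  have ha : 0 < a := ha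
  have hac : a ≤ c := by linarith [self_lt_mul_cosh_div_sinh ha, mul_cosh_div_sinh_lt_cosh ha]
  have hcont : ContinuousOn (fun t => t * cosh t / sinh t) (Icc a c) :=
    (continuous_id.mul continuous_cosh).continuousOn.div continuous_sinh.continuousOn
      fun t ht => (sinh_pos_iff.mpr (ha.trans_le ht.1)).ne'
  obtain ⟨t, ht, hteq⟩ := intermediate_value_Icc hac hcont
    ⟨(mul_cosh_div_sinh_lt_cosh ha).le.trans ha_cosh.le,
      (self_lt_mul_cosh_div_sinh (by linarith)).le⟩
  refine ⟨t, ⟨ha.trans_le ht.1, hteq⟩, fun s ⟨hs, hseq⟩ => ?_⟩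
  exact strictMonoOn_mul_cosh_div_sinh.injOn hs (ha.trans_le ht.1) (hseq.trans hteq.symm)

lemma mul_one_sub_cosh_two_mul_add {α t : ℝ} :
    α * (1 - cosh (2 * t)) + 2 * t * sinh (2 * t)
      = 2 * sinh t * (2 * t * cosh t - α * sinh t) := by
  rw [cosh_two_mul, sinh_two_mul, cosh_sq]
  ring

lemma mul_one_sub_cosh_two_mul_add_eq_zero_iff {α t : ℝ} (ht : 0 < t) :
    α * (1 - cosh (2 * t)) + 2 * t * sinh (2 * t) = 0 ↔ t * cosh t / sinh t = α / 2 := by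
  have hsinh : 0 < sinh t := sinh_pos_iff.mpr ht
  rw [mul_one_sub_cosh_two_mul_add, mul_eq_zero_iff_left (by positivity),
    div_eq_div_iff hsinh.ne' two_ne_zero, sub_eq_zero]
  constructor <;> intro h <;> linarith

end Real

/-- if α > 2, then f_α(x) = α·(1 − cosh x) + x·sinh x has a unique
zero x > 0. -/
theorem stmt_6 (α : ℝ) (hα : 2 < α) (f : ℝ → ℝ)
    (hf : f = fun x => α * (1 - Real.cosh x) + x * Real.sinh x) :
    ∃! x : ℝ, 0 < x ∧ f x = 0 := by
  subst hf
  have hzero : ∀ x, 0 < x →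
      (α * (1 - cosh x) + x * sinh x = 0 ↔ x / 2 * cosh (x / 2) / sinh (x / 2) = α / 2) := by
    intro x hx
    simpa only [mul_div_cancel₀ x two_ne_zero] using
      mul_one_sub_cosh_two_mul_add_eq_zero_iff (α := α) (half_pos hx)
  obtain ⟨t, ⟨ht, hteq⟩, huniq⟩ := existsUnique_pos_mul_cosh_div_sinh_eq (by linarith : 1 < α / 2)
  refine ⟨2 * t, ⟨by positivity, ?_⟩, fun x ⟨hx, hfx⟩ => ?_⟩
  · rw [hzero _ (by positivity), mul_div_cancel_left₀ t two_ne_zero]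
    exact hteq
  · have := huniq (x / 2) ⟨half_pos hx, (hzero x hx).mp hfx⟩
    linarith
end

section
/- If α > 2, then there exists a unique x_α > 0 such that x_α + (1 − α)·tanh(x_α) = 0; moreover f_α is strictly decreasing on (0, x_α) and strictly increasing on (x_α, ∞). -/
/-!
Since `f_α'(x) = cosh x · (x + (1 - α) tanh x)`, everything is about the sign of
`g(x) = x + (1 - α) tanh x`. For `α > 1` the derivative `1 - (α - 1) / cosh² x` of `g` increases
on `[0, ∞)`, so `g` is strictly convex there. As `g 0 = 0` and `g'(0) = 2 - α < 0`, `g` is negative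
just right of `0`, while `g x > x - (α - 1) ≥ 0` for `x ≥ α - 1`. Hence `g` has a zero `x_α > 0`,
and strict convexity forces `g < 0` on `(0, x_α)` and `g > 0` beyond it.
-/

open Real Set Filter Topology

section ConvexSign

variable {𝕜 : Type*} [Field 𝕜] [LinearOrder 𝕜] [IsStrictOrderedRing 𝕜] {s : Set 𝕜} {f : 𝕜 → 𝕜}
  {a c x : 𝕜}

theorem StrictConvexOn.neg_of_mem_Ioo_of_eq_zero (hf : StrictConvexOn 𝕜 s f) (ha : a ∈ s)
    (hc : c ∈ s) (hx : x ∈ s) (hfa : f a = 0) (hfc : f c = 0) (hxac : x ∈ Ioo a c) :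
    f x < 0 := by
  have hslope := hf.secant_strict_mono ha hx hc hxac.1.ne' (hxac.1.trans hxac.2).ne' hxac.2
  rw [hfa, hfc, sub_zero, sub_zero, zero_div] at hslope
  exact neg_of_div_neg_left hslope (sub_nonneg.mpr hxac.1.le)

theorem StrictConvexOn.pos_of_lt_of_eq_zero (hf : StrictConvexOn 𝕜 s f) (ha : a ∈ s)
    (hc : c ∈ s) (hx : x ∈ s) (hfa : f a = 0) (hfc : f c = 0) (hac : a < c) (hcx : c < x) :
    0 < f x := by
  have hslope := hf.secant_strict_mono ha hc hx hac.ne' (hac.trans hcx).ne' hcx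
  rw [hfa, hfc, sub_zero, sub_zero, zero_div] at hslope
  exact (div_pos_iff_of_pos_right (sub_pos.mpr (hac.trans hcx))).mp hslope

end ConvexSign

theorem Real.hasDerivAt_tanh (x : ℝ) : HasDerivAt tanh (cosh x ^ 2)⁻¹ x := by
  have htanh : tanh = fun y => sinh y / cosh y := funext tanh_eq_sinh_div_cosh
  rw [htanh]
  refine ((hasDerivAt_sinh x).div (hasDerivAt_cosh x) (cosh_pos x).ne').congr_deriv ?_
  rw [div_eq_mul_inv, ← sq, ← sq, cosh_sq_sub_sinh_sq, one_mul]

noncomputable def reducedDeriv (α x : ℝ) : ℝ :=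
  x + (1 - α) * tanh x

theorem hasDerivAt_reducedDeriv (α x : ℝ) :
    HasDerivAt (reducedDeriv α) (1 + (1 - α) * (cosh x ^ 2)⁻¹) x :=
  (hasDerivAt_id x).add ((hasDerivAt_tanh x).const_mul (1 - α))

theorem continuous_reducedDeriv (α : ℝ) : Continuous (reducedDeriv α) :=
  continuous_iff_continuousAt.mpr fun x => (hasDerivAt_reducedDeriv α x).continuousAt

theorem hasDerivAt_cosh_mul_reducedDeriv (α x : ℝ) :
    HasDerivAt (fun x => α * (1 - cosh x) + x * sinh x) (cosh x * reducedDeriv α x) x := by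
  refine (((hasDerivAt_cosh x).const_sub 1).const_mul α |>.add
    ((hasDerivAt_id x).mul (hasDerivAt_sinh x))).congr_deriv ?_
  simp only [reducedDeriv, tanh_eq_sinh_div_cosh, id]
  field_simp [(cosh_pos x).ne']
  ring

theorem strictConvexOn_reducedDeriv {α : ℝ} (hα : 1 < α) :
    StrictConvexOn ℝ (Ici 0) (reducedDeriv α) := by
  refine StrictMonoOn.strictConvexOn_of_deriv (convex_Ici 0)
    (continuous_reducedDeriv α).continuousOn ?_
  rw [interior_Ici]
  rintro x (hx : 0 < x) y - hxy
  rw [(hasDerivAt_reducedDeriv α x).deriv, (hasDerivAt_reducedDeriv α y).deriv]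
  have hcosh : cosh x < cosh y := cosh_strictMonoOn hx.le (hx.trans hxy).le hxy
  have hinv : (cosh y ^ 2)⁻¹ < (cosh x ^ 2)⁻¹ := by gcongr
  nlinarith

theorem exists_pos_reducedDeriv_neg {α : ℝ} (hα : 2 < α) : ∃ x, 0 < x ∧ reducedDeriv α x < 0 := by
  have hslope := (hasDerivAt_reducedDeriv α 0).tendsto_slope_zero_right
  rw [cosh_zero] at hslope
  have hneg : ∀ᶠ t in 𝓝[>] (0 : ℝ), t⁻¹ • (reducedDeriv α (0 + t) - reducedDeriv α 0) < 0 :=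
    hslope.eventually_lt_const (by norm_num; linarith)
  obtain ⟨t, ht, htpos⟩ := (hneg.and self_mem_nhdsWithin).exists
  simp only [reducedDeriv, zero_add, tanh_zero, mul_zero, add_zero, sub_zero, smul_eq_mul] at ht
  exact ⟨t, htpos, (pos_iff_neg_of_mul_neg ht).mp (inv_pos.mpr htpos)⟩

theorem reducedDeriv_pos {α x : ℝ} (hα : 1 < α) (hx : α - 1 ≤ x) : 0 < reducedDeriv α x := by
  have := mul_lt_mul_of_neg_left (tanh_lt_one x) (sub_neg.mpr hα)
  unfold reducedDeriv
  linarith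

theorem exists_reducedDeriv_eq_zero {α : ℝ} (hα : 2 < α) :
    ∃ c, 0 < c ∧ reducedDeriv α c = 0 ∧ (∀ x ∈ Ioo 0 c, reducedDeriv α x < 0) ∧
      ∀ x, c < x → 0 < reducedDeriv α x := by
  obtain ⟨a, ha, hga⟩ := exists_pos_reducedDeriv_neg hα
  have haα : a < α - 1 := by
    by_contra! h
    exact hga.not_gt (reducedDeriv_pos (by linarith) h)
  obtain ⟨c, hc, hgc⟩ := intermediate_value_Ioo haα.le (continuous_reducedDeriv α).continuousOn
    ⟨hga, reducedDeriv_pos (by linarith) le_rfl⟩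
  have hconv := strictConvexOn_reducedDeriv (α := α) (by linarith)
  have hc0 : 0 < c := ha.trans hc.1
  have hg0 : reducedDeriv α 0 = 0 := by simp [reducedDeriv]
  refine ⟨c, hc0, hgc, fun x hx => ?_, fun x hx => ?_⟩
  · exact hconv.neg_of_mem_Ioo_of_eq_zero self_mem_Ici hc0.le hx.1.le hg0 hgc hx
  · exact hconv.pos_of_lt_of_eq_zero self_mem_Ici hc0.le (hc0.trans hx).le hg0 hgc hc0 hx

/-- if α > 2, there is a unique x_α > 0 with
x_α + (1 − α)·tanh(x_α) = 0; moreover f_α is strictly decreasing on (0, x_α)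
and strictly increasing on (x_α, ∞). -/
theorem stmt_7 (α : ℝ) (hα : 2 < α) (f : ℝ → ℝ)
    (hf : f = fun x => α * (1 - Real.cosh x) + x * Real.sinh x) :
    ∃ xα : ℝ, 0 < xα ∧ xα + (1 - α) * Real.tanh xα = 0 ∧
      (∀ x : ℝ, 0 < x → x + (1 - α) * Real.tanh x = 0 → x = xα) ∧
      StrictAntiOn f (Ioo 0 xα) ∧ StrictMonoOn f (Ioi xα) := by
  subst hf
  obtain ⟨c, hc0, hgc, hneg, hpos⟩ := exists_reducedDeriv_eq_zero hα
  have hcont : Continuous fun x => α * (1 - cosh x) + x * sinh x := by fun_prop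
  refine ⟨c, hc0, hgc, fun x hx hgx => ?_, ?_, ?_⟩
  · rcases lt_trichotomy x c with h | h | h
    · exact absurd hgx (hneg x ⟨hx, h⟩).ne
    · exact h
    · exact absurd hgx (hpos x h).ne'
  · refine strictAntiOn_of_deriv_neg (convex_Ioo 0 c) hcont.continuousOn fun x hx => ?_
    rw [interior_Ioo] at hx
    rw [(hasDerivAt_cosh_mul_reducedDeriv α x).deriv]
    exact mul_neg_of_pos_of_neg (cosh_pos x) (hneg x hx)
  · refine strictMonoOn_of_deriv_pos (convex_Ioi c) hcont.continuousOn fun x hx => ?_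
    rw [interior_Ioi] at hx
    rw [(hasDerivAt_cosh_mul_reducedDeriv α x).deriv]
    exact mul_pos (cosh_pos x) (hpos x hx)
end

section
/- For every k ∈ ℕ (k ≥ 0) and every a_k ∈ ℝ, the function A_k(y') = a_k·c₁·(y'·cosh(y'ρ*) − (sinh(y'ρ*·√(1+k²))/sinh(ρ*·√(1+k²)))·cosh ρ*) + a_k·c₂·(y'·sinh(y'ρ*) − (sinh(y'ρ*·√(1+k²))/sinh(ρ*·√(1+k²)))·sinh ρ*) satisfies −k²·A_k(y') + (1/ρ*²)·A_k''(y') = A_k(y') + a_k·f_k(y') for all y' ∈ ℝ, together with A_k(0) = 0 and A_k(1) = 0. -/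
/-!
With `s = √(1 + k²)` and `g y = c₁ cosh (ρ y) + c₂ sinh (ρ y)`, which satisfies `g'' = ρ² g`,
`A = a · y g(y) − C · sinh (ρ s y)` for the constant `C = a g(1) / sinh (ρ s)` making `A 1 = 0`.
The term `sinh (ρ s y)` solves the homogeneous equation `u''/ρ² = (1 + k²) u` because `s² = 1 + k²`,
while `(y g)'' = 2 g' + ρ² y g` turns `y g` into a particular solution with right-hand side `f_k`.
-/

open Real

def HasSecondDeriv (f f' f'' : ℝ → ℝ) : Prop :=
  (∀ y, HasDerivAt f (f' y) y) ∧ ∀ y, HasDerivAt f' (f'' y) y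

namespace HasSecondDeriv

variable {f f' f'' g g' g'' : ℝ → ℝ}

theorem deriv_deriv (h : HasSecondDeriv f f' f'') : deriv (deriv f) = f'' := by
  rw [funext fun y => (h.1 y).deriv]
  exact funext fun y => (h.2 y).deriv

theorem const_mul (c : ℝ) (h : HasSecondDeriv f f' f'') :
    HasSecondDeriv (fun y => c * f y) (fun y => c * f' y) (fun y => c * f'' y) :=
  ⟨fun y => (h.1 y).const_mul c, fun y => (h.2 y).const_mul c⟩

theorem sub (hf : HasSecondDeriv f f' f'') (hg : HasSecondDeriv g g' g'') :
    HasSecondDeriv (fun y => f y - g y) (fun y => f' y - g' y) (fun y => f'' y - g'' y) :=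
  ⟨fun y => (hf.1 y).sub (hg.1 y), fun y => (hf.2 y).sub (hg.2 y)⟩

theorem id_mul (h : HasSecondDeriv f f' f'') :
    HasSecondDeriv (fun y => y * f y) (fun y => f y + y * f' y) (fun y => 2 * f' y + y * f'' y) :=
  ⟨fun y => ((hasDerivAt_id' y).fun_mul (h.1 y)).congr_deriv (by ring),
    fun y => ((h.1 y).fun_add ((hasDerivAt_id' y).fun_mul (h.2 y))).congr_deriv (by ring)⟩

end HasSecondDeriv

-- Differentiating swaps `c₁` and `c₂` and brings out a factor `l`, so this solves `u'' = l² u`.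
noncomputable def coshSinhComb (c₁ c₂ l y : ℝ) : ℝ :=
  c₁ * cosh (y * l) + c₂ * sinh (y * l)

theorem hasDerivAt_coshSinhComb (c₁ c₂ l y : ℝ) :
    HasDerivAt (coshSinhComb c₁ c₂ l) (l * coshSinhComb c₂ c₁ l y) y := by
  have h := (hasDerivAt_mul_const l : HasDerivAt (fun y : ℝ => y * l) l y)
  exact ((h.cosh.const_mul c₁).fun_add (h.sinh.const_mul c₂)).congr_deriv
    (by simp only [coshSinhComb]; ring)

theorem hasSecondDeriv_coshSinhComb (c₁ c₂ l : ℝ) :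
    HasSecondDeriv (coshSinhComb c₁ c₂ l) (fun y => l * coshSinhComb c₂ c₁ l y)
      (fun y => l ^ 2 * coshSinhComb c₁ c₂ l y) :=
  ⟨hasDerivAt_coshSinhComb c₁ c₂ l,
    fun y => ((hasDerivAt_coshSinhComb c₂ c₁ l y).const_mul l).congr_deriv (by ring)⟩

theorem stmt_9_general (ρ : ℝ) (hρ : 0 < ρ) (k : ℕ) (a : ℝ)
    (c₁ c₂ : ℝ)
    (fk : ℝ → ℝ)
    (hfk : fk = fun y => (2 / ρ) * (c₁ * Real.sinh (y * ρ) + c₂ * Real.cosh (y * ρ))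
      - (k : ℝ)^2 * y * (c₁ * Real.cosh (y * ρ) + c₂ * Real.sinh (y * ρ)))
    (A : ℝ → ℝ)
    (hA : A = fun y =>
      a * c₁ * (y * Real.cosh (y * ρ)
        - Real.sinh (y * ρ * Real.sqrt (1 + (k : ℝ)^2))
          / Real.sinh (ρ * Real.sqrt (1 + (k : ℝ)^2)) * Real.cosh ρ)
      + a * c₂ * (y * Real.sinh (y * ρ)
        - Real.sinh (y * ρ * Real.sqrt (1 + (k : ℝ)^2))
          / Real.sinh (ρ * Real.sqrt (1 + (k : ℝ)^2)) * Real.sinh ρ)) :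
    (∀ y : ℝ, -(k : ℝ)^2 * A y + (1 / ρ^2) * deriv (deriv A) y = A y + a * fk y) ∧
    A 0 = 0 ∧ A 1 = 0 := by
  set s := √(1 + (k : ℝ) ^ 2)
  have hs : s ^ 2 = 1 + (k : ℝ) ^ 2 := sq_sqrt (by positivity)
  have hS : sinh (ρ * s) ≠ 0 := (sinh_pos_iff.mpr (by positivity)).ne'
  set C := a * coshSinhComb c₁ c₂ ρ 1 / sinh (ρ * s)
  have hA_split :
      A = fun y => a * (y * coshSinhComb c₁ c₂ ρ y) - C * coshSinhComb 0 1 (ρ * s) y := by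
    rw [hA]; ext y; simp only [C, coshSinhComb, one_mul, ← mul_assoc]; ring
  have hA_deriv2 := (((hasSecondDeriv_coshSinhComb c₁ c₂ ρ).id_mul.const_mul a).sub
    ((hasSecondDeriv_coshSinhComb 0 1 (ρ * s)).const_mul C)).deriv_deriv
  rw [← hA_split] at hA_deriv2
  refine ⟨fun y => ?_, ?_, ?_⟩
  · rw [hA_deriv2, hA_split, hfk, mul_pow, hs]
    simp only [coshSinhComb]
    field_simp
    ring
  · simp [hA_split, coshSinhComb]
  · simp only [hA_split, C, coshSinhComb]
    field_simp
    ring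

/-- the explicitly given A_k solves
−k²·A_k + (1/ρ*²)·A_k'' = A_k + a_k·f_k on ℝ with A_k(0) = 0 and A_k(1) = 0. -/
theorem stmt_9 (σ₁ σ₂ ρ : ℝ) (hρ : 0 < ρ) (k : ℕ) (a : ℝ)
    (c₁ c₂ : ℝ) (hc₁ : c₁ = (σ₂ - σ₁ * Real.cosh ρ) / Real.sinh ρ) (hc₂ : c₂ = σ₁)
    (fk : ℝ → ℝ)
    (hfk : fk = fun y => (2 / ρ) * (c₁ * Real.sinh (y * ρ) + c₂ * Real.cosh (y * ρ))
      - (k : ℝ)^2 * y * (c₁ * Real.cosh (y * ρ) + c₂ * Real.sinh (y * ρ)))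
    (A : ℝ → ℝ)
    (hA : A = fun y =>
      a * c₁ * (y * Real.cosh (y * ρ)
        - Real.sinh (y * ρ * Real.sqrt (1 + (k : ℝ)^2))
          / Real.sinh (ρ * Real.sqrt (1 + (k : ℝ)^2)) * Real.cosh ρ)
      + a * c₂ * (y * Real.sinh (y * ρ)
        - Real.sinh (y * ρ * Real.sqrt (1 + (k : ℝ)^2))
          / Real.sinh (ρ * Real.sqrt (1 + (k : ℝ)^2)) * Real.sinh ρ)) :
    (∀ y : ℝ, -(k : ℝ)^2 * A y + (1 / ρ^2) * deriv (deriv A) y = A y + a * fk y) ∧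
    A 0 = 0 ∧ A 1 = 0 :=
  stmt_9_general ρ hρ k a c₁ c₂ fk hfk A hA
end

section
/- For every a₀ ∈ ℝ, the function M₀(y') = −(a₀·μ·c₃/sinh ρ*)·(y'ρ* − ρ* − sinh(y'ρ*)) − a₀·μ·σ̃·ρ* − a₀·μ·c₁ + a₀·μ·c₁·y' + a₀·μ·σ̃·ρ*·(y')² − a₀·μ·(c₁·y'·cosh(y'ρ*) + c₂·y'·sinh(y'ρ*)) satisfies (1/ρ*²)·M₀''(y') = −μ·A₀(y') + a₀·g₀(y') for all y' ∈ ℝ, together with M₀'(0) = 0 and M₀(1) = 0, where A₀(y') = a₀·c₁·(y'·cosh(y'ρ*) − (sinh(y'ρ*)/sinh ρ*)·cosh ρ*) + a₀·c₂·(y'·sinh(y'ρ*) − (sinh(y'ρ*)/sinh ρ*)·sinh ρ*) and g₀(y') = (2/ρ*)·μ·(σ̃ − c₁·sinh(y'ρ*) − c₂·cosh(y'ρ*)). -/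
/-!
Every function `y ↦ α + β y + γ y² + φ(y) + y ψ(y)`, with `φ, ψ` linear combinations of
`cosh (y ρ)` and `sinh (y ρ)`, differentiates to a function of the same shape, so two
derivatives of `M₀` are read off from its coefficients. The ODE is then an identity of
coefficients: the `sinh (y ρ)` terms match because `c₃ = c₁ cosh ρ + c₂ sinh ρ` is the
value at `1` of `c₁ cosh (y ρ) + c₂ sinh (y ρ)`, and the same fact gives `M₀ 1 = 0`.
-/

open Real

noncomputable def coshSinh (c₁ c₂ ρ y : ℝ) : ℝ := c₁ * cosh (y * ρ) + c₂ * sinh (y * ρ)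

noncomputable def quadCoshSinh (α β γ d₁ d₂ c₁ c₂ ρ y : ℝ) : ℝ :=
  α + β * y + γ * y ^ 2 + coshSinh d₁ d₂ ρ y + y * coshSinh c₁ c₂ ρ y

theorem hasDerivAt_coshSinh (c₁ c₂ ρ x : ℝ) :
    HasDerivAt (coshSinh c₁ c₂ ρ) (ρ * coshSinh c₂ c₁ ρ x) x := by
  have h : HasDerivAt (fun y => c₁ * cosh (y * ρ) + c₂ * sinh (y * ρ)) _ x :=
    (((hasDerivAt_mul_const (x := x) ρ).cosh).const_mul c₁).add
      (((hasDerivAt_mul_const (x := x) ρ).sinh).const_mul c₂)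
  exact h.congr_deriv (by simp only [coshSinh]; ring)

theorem hasDerivAt_quadCoshSinh (α β γ d₁ d₂ c₁ c₂ ρ x : ℝ) :
    HasDerivAt (quadCoshSinh α β γ d₁ d₂ c₁ c₂ ρ)
      (quadCoshSinh β (2 * γ) 0 (ρ * d₂ + c₁) (ρ * d₁ + c₂) (ρ * c₂) (ρ * c₁) ρ x) x := by
  have h : HasDerivAt
      (fun y => α + β * y + γ * y ^ 2 + coshSinh d₁ d₂ ρ y + y * coshSinh c₁ c₂ ρ y) _ x :=
    (((((hasDerivAt_id' x).const_mul β).const_add α).add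
      ((hasDerivAt_pow 2 x).const_mul γ)).add (hasDerivAt_coshSinh d₁ d₂ ρ x)).add
      ((hasDerivAt_id' x).mul (hasDerivAt_coshSinh c₁ c₂ ρ x))
  exact h.congr_deriv (by simp only [quadCoshSinh, coshSinh]; push_cast; ring)

theorem deriv_quadCoshSinh (α β γ d₁ d₂ c₁ c₂ ρ : ℝ) :
    deriv (quadCoshSinh α β γ d₁ d₂ c₁ c₂ ρ) =
      quadCoshSinh β (2 * γ) 0 (ρ * d₂ + c₁) (ρ * d₁ + c₂) (ρ * c₂) (ρ * c₁) ρ :=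
  funext fun x => (hasDerivAt_quadCoshSinh α β γ d₁ d₂ c₁ c₂ ρ x).deriv

theorem stmt_11_general (σt μ ρ : ℝ) (hρ : 0 < ρ) (a : ℝ)
    (c₁ c₂ c₃ : ℝ)
    (hc₃ : c₃ = c₁ * Real.cosh ρ + c₂ * Real.sinh ρ)
    (A₀ g₀ M₀ : ℝ → ℝ)
    (hA₀ : A₀ = fun y =>
      a * c₁ * (y * Real.cosh (y * ρ) - Real.sinh (y * ρ) / Real.sinh ρ * Real.cosh ρ)
      + a * c₂ * (y * Real.sinh (y * ρ) - Real.sinh (y * ρ) / Real.sinh ρ * Real.sinh ρ))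
    (hg₀ : g₀ = fun y =>
      (2 / ρ) * μ * (σt - c₁ * Real.sinh (y * ρ) - c₂ * Real.cosh (y * ρ)))
    (hM₀ : M₀ = fun y =>
      -(a * μ * c₃ / Real.sinh ρ) * (y * ρ - ρ - Real.sinh (y * ρ))
      - a * μ * σt * ρ - a * μ * c₁
      + a * μ * c₁ * y + a * μ * σt * ρ * y^2
      - a * μ * (c₁ * y * Real.cosh (y * ρ) + c₂ * y * Real.sinh (y * ρ))) :
    (∀ y : ℝ, (1 / ρ^2) * deriv (deriv M₀) y = -μ * A₀ y + a * g₀ y) ∧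
    deriv M₀ 0 = 0 ∧ M₀ 1 = 0 := by
  have hsinh : sinh ρ ≠ 0 := (sinh_pos_iff.mpr hρ).ne'
  set K := a * μ * c₃ / sinh ρ
  have hM : M₀ = quadCoshSinh (K * ρ - a * μ * σt * ρ - a * μ * c₁) (a * μ * c₁ - K * ρ)
      (a * μ * σt * ρ) 0 K (-(a * μ * c₁)) (-(a * μ * c₂)) ρ := by
    subst hM₀
    funext y
    simp only [quadCoshSinh, coshSinh]
    ring
  subst hA₀ hg₀ hc₃
  simp only [hM, deriv_quadCoshSinh, quadCoshSinh, coshSinh, K]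
  refine ⟨fun y => ?_, ?_, ?_⟩
  · field_simp
    ring
  · simp only [zero_mul, cosh_zero, sinh_zero]
    ring
  · field_simp
    ring

/-- the explicitly given M₀ solves
(1/ρ*²)·M₀'' = −μ·A₀ + a₀·g₀ on ℝ with M₀'(0) = 0 and M₀(1) = 0. -/
theorem stmt_11 (σ₁ σ₂ σt μ ρ : ℝ) (hμ : 0 < μ) (hρ : 0 < ρ) (a : ℝ)
    (c₁ c₂ c₃ : ℝ) (hc₁ : c₁ = (σ₂ - σ₁ * Real.cosh ρ) / Real.sinh ρ) (hc₂ : c₂ = σ₁)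
    (hc₃ : c₃ = c₁ * Real.cosh ρ + c₂ * Real.sinh ρ)
    (A₀ g₀ M₀ : ℝ → ℝ)
    (hA₀ : A₀ = fun y =>
      a * c₁ * (y * Real.cosh (y * ρ) - Real.sinh (y * ρ) / Real.sinh ρ * Real.cosh ρ)
      + a * c₂ * (y * Real.sinh (y * ρ) - Real.sinh (y * ρ) / Real.sinh ρ * Real.sinh ρ))
    (hg₀ : g₀ = fun y =>
      (2 / ρ) * μ * (σt - c₁ * Real.sinh (y * ρ) - c₂ * Real.cosh (y * ρ)))
    (hM₀ : M₀ = fun y =>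
      -(a * μ * c₃ / Real.sinh ρ) * (y * ρ - ρ - Real.sinh (y * ρ))
      - a * μ * σt * ρ - a * μ * c₁
      + a * μ * c₁ * y + a * μ * σt * ρ * y^2
      - a * μ * (c₁ * y * Real.cosh (y * ρ) + c₂ * y * Real.sinh (y * ρ))) :
    (∀ y : ℝ, (1 / ρ^2) * deriv (deriv M₀) y = -μ * A₀ y + a * g₀ y) ∧
    deriv M₀ 0 = 0 ∧ M₀ 1 = 0 :=
  stmt_11_general σt μ ρ hρ a c₁ c₂ c₃ hc₃ A₀ g₀ M₀ hA₀ hg₀ hM₀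
end

section
/- For every positive integer k and every a_k ∈ ℝ, the function M_k(y') = −(a_k·μ·c₃·√(1+k²)/(k·sinh(ρ*·√(1+k²))))·(sinh(y'ρ*k) − tanh(ρ*k)·cosh(y'ρ*k)) + a_k·μ·c₃·sinh(y'ρ*·√(1+k²))/sinh(ρ*·√(1+k²)) + a_k·(γk² − μσ̃ρ* − μc₁)·cosh(y'ρ*k)/cosh(ρ*k) + a_k·μ·c₁·y' + a_k·μ·σ̃·ρ*·(y')² − a_k·μ·(c₁·y'·cosh(y'ρ*) + c₂·y'·sinh(y'ρ*)) satisfies −k²·M_k(y') + (1/ρ*²)·M_k''(y') = −μ·A_k(y') + a_k·g_k(y') for all y' ∈ ℝ, together with M_k'(0) = 0 and M_k(1) = γ·k²·a_k, where A_k(y') = a_k·c₁·(y'·cosh(y'ρ*) − (sinh(y'ρ*·√(1+k²))/sinh(ρ*·√(1+k²)))·cosh ρ*) + a_k·c₂·(y'·sinh(y'ρ*) − (sinh(y'ρ*·√(1+k²))/sinh(ρ*·√(1+k²)))·sinh ρ*) and g_k(y') = (2/ρ*)·μ·(σ̃ − c₁·sinh(y'ρ*) − c₂·cosh(y'ρ*))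 − k²·μ·(c₁·y' + σ̃·ρ*·(y')² − c₂·y'·sinh(y'ρ*) − c₁·y'·cosh(y'ρ*)). -/
open Real

/-! Every term of `M_k` is a product of a polynomial of degree at most two and a hyperbolic
function of `y ρ c`, so its first two derivatives follow from the product and chain rules.
For `L = -k² + ρ⁻² d²/dy²`, the terms `sinh (y ρ k)`, `cosh (y ρ k)` lie in the kernel of `L`
and `sinh (y ρ √(1 + k²))` is fixed by it, so the differential equation becomes an identity
between hyperbolic functions. At `y = 1` the factor `sinh - tanh · cosh` vanishes and `c₃`
collects the remaining hyperbolic terms, giving `M_k 1 = γ k² a_k`. -/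

structure HasTwoDerivs (f f' f'' : ℝ → ℝ) : Prop where
  first : ∀ y, HasDerivAt f (f' y) y
  second : ∀ y, HasDerivAt f' (f'' y) y

namespace HasTwoDerivs

variable {f f' f'' g g' g'' : ℝ → ℝ}

theorem deriv_eq (h : HasTwoDerivs f f' f'') : deriv f = f' :=
  funext fun y => (h.first y).deriv

theorem deriv_deriv_eq (h : HasTwoDerivs f f' f'') : deriv (deriv f) = f'' := by
  rw [h.deriv_eq]
  exact funext fun y => (h.second y).deriv

theorem add (hf : HasTwoDerivs f f' f'') (hg : HasTwoDerivs g g' g'') :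
    HasTwoDerivs (fun y => f y + g y) (fun y => f' y + g' y) (fun y => f'' y + g'' y) :=
  ⟨fun y => (hf.first y).add (hg.first y), fun y => (hf.second y).add (hg.second y)⟩

theorem sub (hf : HasTwoDerivs f f' f'') (hg : HasTwoDerivs g g' g'') :
    HasTwoDerivs (fun y => f y - g y) (fun y => f' y - g' y) (fun y => f'' y - g'' y) :=
  ⟨fun y => (hf.first y).sub (hg.first y), fun y => (hf.second y).sub (hg.second y)⟩

theorem const_mul (c : ℝ) (hf : HasTwoDerivs f f' f'') :
    HasTwoDerivs (fun y => c * f y) (fun y => c * f' y) (fun y => c * f'' y) :=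
  ⟨fun y => (hf.first y).const_mul c, fun y => (hf.second y).const_mul c⟩

theorem div_const (hf : HasTwoDerivs f f' f'') (c : ℝ) :
    HasTwoDerivs (fun y => f y / c) (fun y => f' y / c) (fun y => f'' y / c) :=
  ⟨fun y => (hf.first y).div_const c, fun y => (hf.second y).div_const c⟩

theorem mul (hf : HasTwoDerivs f f' f'') (hg : HasTwoDerivs g g' g'') :
    HasTwoDerivs (fun y => f y * g y) (fun y => f' y * g y + f y * g' y)
      (fun y => f'' y * g y + 2 * (f' y * g' y) + f y * g'' y) :=
  ⟨fun y => (hf.first y).mul (hg.first y), fun y =>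
    (((hf.second y).mul (hg.first y)).add ((hf.first y).mul (hg.second y))).congr_deriv
      (by ring)⟩

theorem comp_mul_const (hf : HasTwoDerivs f f' f'') (c : ℝ) :
    HasTwoDerivs (fun y => f (y * c)) (fun y => c * f' (y * c)) (fun y => c ^ 2 * f'' (y * c)) := by
  have hlin (y : ℝ) : HasDerivAt (fun y => y * c) c y := by
    simpa using (hasDerivAt_id y).mul_const c
  refine ⟨fun y => ?_, fun y => ?_⟩
  · exact ((hf.first (y * c)).comp y (hlin y)).congr_deriv (mul_comm _ _)
  · exact (((hf.second (y * c)).comp y (hlin y)).const_mul c).congr_deriv (by ring)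

end HasTwoDerivs

theorem hasTwoDerivs_id : HasTwoDerivs (fun y => y) (fun _ => 1) (fun _ => 0) :=
  ⟨hasDerivAt_id, fun _ => hasDerivAt_const _ _⟩

theorem hasTwoDerivs_sq : HasTwoDerivs (fun y => y ^ 2) (fun y => 2 * y) (fun _ => 2) := by
  refine ⟨fun y => ?_, fun y => ?_⟩
  · simpa using hasDerivAt_pow 2 y
  · simpa using (hasDerivAt_id y).const_mul 2

theorem hasTwoDerivs_sinh : HasTwoDerivs sinh cosh sinh :=
  ⟨hasDerivAt_sinh, hasDerivAt_cosh⟩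

theorem hasTwoDerivs_cosh : HasTwoDerivs cosh sinh cosh :=
  ⟨hasDerivAt_cosh, hasDerivAt_sinh⟩

theorem stmt_12_general (σt μ γ ρ : ℝ) (hρ : 0 < ρ)
    (k : ℕ) (hk : 0 < k) (a : ℝ)
    (c₁ c₂ c₃ : ℝ)
    (hc₃ : c₃ = c₁ * Real.cosh ρ + c₂ * Real.sinh ρ)
    (Ak gk Mk : ℝ → ℝ)
    (hAk : Ak = fun y =>
      a * c₁ * (y * Real.cosh (y * ρ)
        - Real.sinh (y * ρ * Real.sqrt (1 + (k : ℝ)^2))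
          / Real.sinh (ρ * Real.sqrt (1 + (k : ℝ)^2)) * Real.cosh ρ)
      + a * c₂ * (y * Real.sinh (y * ρ)
        - Real.sinh (y * ρ * Real.sqrt (1 + (k : ℝ)^2))
          / Real.sinh (ρ * Real.sqrt (1 + (k : ℝ)^2)) * Real.sinh ρ))
    (hgk : gk = fun y =>
      (2 / ρ) * μ * (σt - c₁ * Real.sinh (y * ρ) - c₂ * Real.cosh (y * ρ))
      - (k : ℝ)^2 * μ * (c₁ * y + σt * ρ * y^2 - c₂ * y * Real.sinh (y * ρ)
        - c₁ * y * Real.cosh (y * ρ)))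
    (hMk : Mk = fun y =>
      -(a * μ * c₃ * Real.sqrt (1 + (k : ℝ)^2)
          / ((k : ℝ) * Real.sinh (ρ * Real.sqrt (1 + (k : ℝ)^2))))
        * (Real.sinh (y * ρ * k) - Real.tanh (ρ * k) * Real.cosh (y * ρ * k))
      + a * μ * c₃ * Real.sinh (y * ρ * Real.sqrt (1 + (k : ℝ)^2))
          / Real.sinh (ρ * Real.sqrt (1 + (k : ℝ)^2))
      + a * (γ * (k : ℝ)^2 - μ * σt * ρ - μ * c₁) * Real.cosh (y * ρ * k)
          / Real.cosh (ρ * k)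
      + a * μ * c₁ * y + a * μ * σt * ρ * y^2
      - a * μ * (c₁ * y * Real.cosh (y * ρ) + c₂ * y * Real.sinh (y * ρ))) :
    (∀ y : ℝ, -(k : ℝ)^2 * Mk y + (1 / ρ^2) * deriv (deriv Mk) y
      = -μ * Ak y + a * gk y) ∧
    deriv Mk 0 = 0 ∧ Mk 1 = γ * (k : ℝ)^2 * a := by
  have hk0 : (k : ℝ) ≠ 0 := by positivity
  have hs2 : √(1 + (k : ℝ) ^ 2) ^ 2 = 1 + (k : ℝ) ^ 2 := sq_sqrt (by positivity)
  have hsinh : sinh (ρ * √(1 + (k : ℝ) ^ 2)) ≠ 0 := (sinh_pos_iff.2 (by positivity)).ne'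
  have hcosh : cosh (ρ * k) ≠ 0 := (cosh_pos _).ne'
  have hsinK := (hasTwoDerivs_sinh.comp_mul_const (k : ℝ)).comp_mul_const ρ
  have hcoshK := (hasTwoDerivs_cosh.comp_mul_const (k : ℝ)).comp_mul_const ρ
  have hsinS := (hasTwoDerivs_sinh.comp_mul_const √(1 + (k : ℝ) ^ 2)).comp_mul_const ρ
  have hlin := hasTwoDerivs_id.const_mul
  -- the derivatives `?M'`, `?M''` are read off from this term, built term by term along `Mk`
  have hM : HasTwoDerivs Mk ?M' ?M'' := by
    rw [hMk]
    exact ((((((hsinK.sub (hcoshK.const_mul _)).const_mul _).add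
      ((hsinS.const_mul _).div_const _)).add ((hcoshK.const_mul _).div_const _)).add
      (hlin _)).add (hasTwoDerivs_sq.const_mul _)).sub
      ((((hlin c₁).mul (hasTwoDerivs_cosh.comp_mul_const ρ)).add
        ((hlin c₂).mul (hasTwoDerivs_sinh.comp_mul_const ρ))).const_mul _)
  refine ⟨fun y => ?_, ?_, ?_⟩
  · rw [hM.deriv_deriv_eq, hMk, hAk, hgk, hc₃]
    simp only [hs2, tanh_eq_sinh_div_cosh]
    field_simp
    ring
  · simp only [hM.deriv_eq, zero_mul, mul_zero, sinh_zero, cosh_zero]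
    field_simp
    ring
  · simp only [hMk, hc₃, one_mul, one_pow, mul_one, tanh_eq_sinh_div_cosh,
      div_mul_cancel₀ _ hcosh, sub_self, mul_zero, zero_add, mul_div_assoc, div_self hsinh,
      div_self hcosh]
    ring

/-- for a positive integer k, the explicitly given M_k solves
−k²·M_k + (1/ρ*²)·M_k'' = −μ·A_k + a_k·g_k on ℝ with M_k'(0) = 0 and
M_k(1) = γ·k²·a_k. -/
theorem stmt_12 (σ₁ σ₂ σt μ γ ρ : ℝ) (hμ : 0 < μ) (hρ : 0 < ρ)
    (k : ℕ) (hk : 0 < k) (a : ℝ)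
    (c₁ c₂ c₃ : ℝ) (hc₁ : c₁ = (σ₂ - σ₁ * Real.cosh ρ) / Real.sinh ρ) (hc₂ : c₂ = σ₁)
    (hc₃ : c₃ = c₁ * Real.cosh ρ + c₂ * Real.sinh ρ)
    (Ak gk Mk : ℝ → ℝ)
    (hAk : Ak = fun y =>
      a * c₁ * (y * Real.cosh (y * ρ)
        - Real.sinh (y * ρ * Real.sqrt (1 + (k : ℝ)^2))
          / Real.sinh (ρ * Real.sqrt (1 + (k : ℝ)^2)) * Real.cosh ρ)
      + a * c₂ * (y * Real.sinh (y * ρ)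
        - Real.sinh (y * ρ * Real.sqrt (1 + (k : ℝ)^2))
          / Real.sinh (ρ * Real.sqrt (1 + (k : ℝ)^2)) * Real.sinh ρ))
    (hgk : gk = fun y =>
      (2 / ρ) * μ * (σt - c₁ * Real.sinh (y * ρ) - c₂ * Real.cosh (y * ρ))
      - (k : ℝ)^2 * μ * (c₁ * y + σt * ρ * y^2 - c₂ * y * Real.sinh (y * ρ)
        - c₁ * y * Real.cosh (y * ρ)))
    (hMk : Mk = fun y =>
      -(a * μ * c₃ * Real.sqrt (1 + (k : ℝ)^2)
          / ((k : ℝ) * Real.sinh (ρ * Real.sqrt (1 + (k : ℝ)^2))))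
        * (Real.sinh (y * ρ * k) - Real.tanh (ρ * k) * Real.cosh (y * ρ * k))
      + a * μ * c₃ * Real.sinh (y * ρ * Real.sqrt (1 + (k : ℝ)^2))
          / Real.sinh (ρ * Real.sqrt (1 + (k : ℝ)^2))
      + a * (γ * (k : ℝ)^2 - μ * σt * ρ - μ * c₁) * Real.cosh (y * ρ * k)
          / Real.cosh (ρ * k)
      + a * μ * c₁ * y + a * μ * σt * ρ * y^2
      - a * μ * (c₁ * y * Real.cosh (y * ρ) + c₂ * y * Real.sinh (y * ρ))) :
    (∀ y : ℝ, -(k : ℝ)^2 * Mk y + (1 / ρ^2) * deriv (deriv Mk) y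
      = -μ * Ak y + a * gk y) ∧
    deriv Mk 0 = 0 ∧ Mk 1 = γ * (k : ℝ)^2 * a :=
  stmt_12_general σt μ γ ρ hρ k hk a c₁ c₂ c₃ hc₃ Ak gk Mk hAk hgk hMk
end

section
/- For every k ∈ ℕ, the two expressions for the eigenvalue agree: −μ·c₃·√(1+k²)/(sinh(ρ*·√(1+k²))·cosh(ρ*k)) + μ·c₃·√(1+k²)/tanh(ρ*·√(1+k²)) + (γ·k² − μ·σ̃·ρ* − μ·c₁)·k·tanh(ρ*k) + 2·μ·σ̃ + (μ/ρ*)·(c₁ − c₃) − μ·(c₁·sinh ρ* + c₂·cosh ρ*) = λ_k, provided that (σ̄₁ + σ̄₂)·(1 − cosh ρ*) + σ̃·ρ*·sinh ρ* = 0. -/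
open Real

/-!
Everything reduces to three hyperbolic identities for the constants:
`c₁ sinh ρ* + c₂ cosh ρ* = σ̄₂`, `c₃ = (σ̄₂ cosh ρ* − σ̄₁) / sinh ρ*` (by `cosh² − sinh² = 1`), and
`c₁ − c₃ = (σ̄₁ + σ̄₂)(1 − cosh ρ*) / sinh ρ* = −σ̃ ρ*` by the hypothesis. Writing `coth = cosh / sinh`,
the first two terms of the left-hand side combine into the first term of `λ_k`.
-/

namespace Real

variable {a b x : ℝ}

theorem div_sinh_mul_sinh_add_mul_cosh (hx : sinh x ≠ 0) :
    (b - a * cosh x) / sinh x * sinh x + a * cosh x = b := by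
  rw [div_mul_cancel₀ _ hx]
  ring

theorem div_sinh_mul_cosh_add_mul_sinh (hx : sinh x ≠ 0) :
    (b - a * cosh x) / sinh x * cosh x + a * sinh x = (b * cosh x - a) / sinh x := by
  have hpyth := cosh_sq_sub_sinh_sq x
  field_simp
  linear_combination (-a) * hpyth

theorem div_sinh_sub_div_sinh (hx : sinh x ≠ 0) :
    (b - a * cosh x) / sinh x - (b * cosh x - a) / sinh x = (a + b) * (1 - cosh x) / sinh x := by
  field_simp
  ring

theorem neg_div_sinh_mul_add_div_tanh {y K : ℝ} (A : ℝ) (hy : sinh y ≠ 0) (hK : K ≠ 0) :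
    -A / (sinh y * K) + A / tanh y = A * (cosh y * K - 1) / (sinh y * K) := by
  rw [tanh_eq_sinh_div_cosh]
  field_simp
  ring

end Real

theorem stmt_14_general (σ₁ σ₂ σt μ γ ρ : ℝ)
    (hρ : 0 < ρ)
    (hstat : (σ₁ + σ₂) * (1 - Real.cosh ρ) + σt * ρ * Real.sinh ρ = 0)
    (c₁ c₂ c₃ : ℝ) (hc₁ : c₁ = (σ₂ - σ₁ * Real.cosh ρ) / Real.sinh ρ) (hc₂ : c₂ = σ₁)
    (hc₃ : c₃ = c₁ * Real.cosh ρ + c₂ * Real.sinh ρ)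
    (lam : ℕ → ℝ)
    (hlam : lam = fun (k : ℕ) => μ * (σ₂ * Real.cosh ρ - σ₁) * Real.sqrt (1 + (k : ℝ)^2)
        * (Real.cosh (ρ * Real.sqrt (1 + (k : ℝ)^2)) * Real.cosh (ρ * k) - 1)
        / (Real.sinh ρ * Real.sinh (ρ * Real.sqrt (1 + (k : ℝ)^2)) * Real.cosh (ρ * k))
      + (γ * (k : ℝ)^2 - μ * σt * ρ - μ * c₁) * (k : ℝ) * Real.tanh (ρ * k)
      + μ * (σt - σ₂)) :
    ∀ k : ℕ,
      -(μ * c₃ * Real.sqrt (1 + (k : ℝ)^2))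
          / (Real.sinh (ρ * Real.sqrt (1 + (k : ℝ)^2)) * Real.cosh (ρ * k))
      + μ * c₃ * Real.sqrt (1 + (k : ℝ)^2) / Real.tanh (ρ * Real.sqrt (1 + (k : ℝ)^2))
      + (γ * (k : ℝ)^2 - μ * σt * ρ - μ * c₁) * (k : ℝ) * Real.tanh (ρ * k)
      + 2 * μ * σt + (μ / ρ) * (c₁ - c₃)
      - μ * (c₁ * Real.sinh ρ + c₂ * Real.cosh ρ) = lam k := by
  intro k
  have hs : sinh ρ ≠ 0 := (sinh_pos_iff.mpr hρ).ne'
  have hS : sinh (ρ * √(1 + (k : ℝ) ^ 2)) ≠ 0 :=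
    (sinh_pos_iff.mpr (mul_pos hρ (sqrt_pos.mpr (by positivity)))).ne'
  have hc₃' : c₃ = (σ₂ * cosh ρ - σ₁) / sinh ρ := by
    rw [hc₃, hc₁, hc₂, div_sinh_mul_cosh_add_mul_sinh hs]
  have hdiff : c₁ - c₃ = -(σt * ρ) := by
    rw [hc₁, hc₃', div_sinh_sub_div_sinh hs, div_eq_iff hs]
    linear_combination hstat
  have hsum : c₁ * sinh ρ + c₂ * cosh ρ = σ₂ := by
    rw [hc₁, hc₂, div_sinh_mul_sinh_add_mul_cosh hs]
  rw [hlam, hdiff, hsum, neg_div_sinh_mul_add_div_tanh _ hS (cosh_pos _).ne', hc₃']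
  field_simp
  ring

/-- the two expressions for the eigenvalue λ_k agree, provided
(σ̄₁ + σ̄₂)·(1 − cosh ρ*) + σ̃·ρ*·sinh ρ* = 0. -/
theorem stmt_14 (σ₁ σ₂ σt μ γ ρ : ℝ)
    (hσ₁ : 0 < σ₁) (hσ₂ : 0 < σ₂) (hσt : 0 < σt) (hμ : 0 < μ) (hγ : 0 < γ) (hρ : 0 < ρ)
    (hstat : (σ₁ + σ₂) * (1 - Real.cosh ρ) + σt * ρ * Real.sinh ρ = 0)
    (c₁ c₂ c₃ : ℝ) (hc₁ : c₁ = (σ₂ - σ₁ * Real.cosh ρ) / Real.sinh ρ) (hc₂ : c₂ = σ₁)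
    (hc₃ : c₃ = c₁ * Real.cosh ρ + c₂ * Real.sinh ρ)
    (lam : ℕ → ℝ)
    (hlam : lam = fun (k : ℕ) => μ * (σ₂ * Real.cosh ρ - σ₁) * Real.sqrt (1 + (k : ℝ)^2)
        * (Real.cosh (ρ * Real.sqrt (1 + (k : ℝ)^2)) * Real.cosh (ρ * k) - 1)
        / (Real.sinh ρ * Real.sinh (ρ * Real.sqrt (1 + (k : ℝ)^2)) * Real.cosh (ρ * k))
      + (γ * (k : ℝ)^2 - μ * σt * ρ - μ * c₁) * (k : ℝ) * Real.tanh (ρ * k)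
      + μ * (σt - σ₂)) :
    ∀ k : ℕ,
      -(μ * c₃ * Real.sqrt (1 + (k : ℝ)^2))
          / (Real.sinh (ρ * Real.sqrt (1 + (k : ℝ)^2)) * Real.cosh (ρ * k))
      + μ * c₃ * Real.sqrt (1 + (k : ℝ)^2) / Real.tanh (ρ * Real.sqrt (1 + (k : ℝ)^2))
      + (γ * (k : ℝ)^2 - μ * σt * ρ - μ * c₁) * (k : ℝ) * Real.tanh (ρ * k)
      + 2 * μ * σt + (μ / ρ) * (c₁ - c₃)
      - μ * (c₁ * Real.sinh ρ + c₂ * Real.cosh ρ) = lam k :=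
  stmt_14_general σ₁ σ₂ σt μ γ ρ hρ hstat c₁ c₂ c₃ hc₁ hc₂ hc₃ lam hlam
end

section
/- If ρ* > 0 satisfies (σ̄₁ + σ̄₂)·(1 − cosh ρ*) + σ̃·ρ*·sinh ρ* = 0, then λ₀ = μ·σ̃·(1 − ρ*/sinh ρ*), and in particular λ₀ > 0. -/
open Real

theorem one_sub_div_sinh_pos {x : ℝ} (hx : 0 < x) : 0 < 1 - x / sinh x := by
  rw [sub_pos, div_lt_one (sinh_pos_iff.2 hx)]
  exact self_lt_sinh_iff.2 hx

/-- The left side is `λ₀`: at `k = 0` we have `√(1 + k²) = 1` and the `tanh` term vanishes. -/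
theorem stationary_eigenvalue_zero_eq {σ₁ σ₂ σt ρ : ℝ} (hρ : ρ ≠ 0)
    (hstat : (σ₁ + σ₂) * (1 - cosh ρ) + σt * ρ * sinh ρ = 0) (μ : ℝ) :
    μ * (σ₂ * cosh ρ - σ₁) * (cosh ρ - 1) / (sinh ρ * sinh ρ) + μ * (σt - σ₂)
      = μ * σt * (1 - ρ / sinh ρ) := by
  have hs : sinh ρ ≠ 0 := sinh_ne_zero.2 hρ
  have hcosh_sq : cosh ρ ^ 2 - 1 = sinh ρ ^ 2 := by linarith [cosh_sq ρ]
  field_simp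
  linear_combination μ * hstat + μ * σ₂ * hcosh_sq

theorem stmt_15_general (σ₁ σ₂ σt μ γ ρ : ℝ)
    (hσt : 0 < σt) (hμ : 0 < μ) (hρ : 0 < ρ)
    (hstat : (σ₁ + σ₂) * (1 - Real.cosh ρ) + σt * ρ * Real.sinh ρ = 0)
    (c₁ : ℝ)
    (lam : ℕ → ℝ)
    (hlam : lam = fun (k : ℕ) => μ * (σ₂ * Real.cosh ρ - σ₁) * Real.sqrt (1 + (k : ℝ)^2)
        * (Real.cosh (ρ * Real.sqrt (1 + (k : ℝ)^2)) * Real.cosh (ρ * k) - 1)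
        / (Real.sinh ρ * Real.sinh (ρ * Real.sqrt (1 + (k : ℝ)^2)) * Real.cosh (ρ * k))
      + (γ * (k : ℝ)^2 - μ * σt * ρ - μ * c₁) * (k : ℝ) * Real.tanh (ρ * k)
      + μ * (σt - σ₂)) :
    lam 0 = μ * σt * (1 - ρ / Real.sinh ρ) ∧ 0 < lam 0 := by
  have hlam_zero : lam 0 = μ * (σ₂ * cosh ρ - σ₁) * (cosh ρ - 1) / (sinh ρ * sinh ρ)
      + μ * (σt - σ₂) := by
    simp [hlam]
  have heq : lam 0 = μ * σt * (1 - ρ / sinh ρ) := by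
    rw [hlam_zero, stationary_eigenvalue_zero_eq hρ.ne' hstat]
  refine ⟨heq, ?_⟩
  rw [heq]
  have := one_sub_div_sinh_pos hρ
  positivity

/-- if ρ* > 0 satisfies the stationarity condition, then
λ₀ = μ·σ̃·(1 − ρ*/sinh ρ*) and λ₀ > 0. -/
theorem stmt_15 (σ₁ σ₂ σt μ γ ρ : ℝ)
    (hσ₁ : 0 < σ₁) (hσ₂ : 0 < σ₂) (hσt : 0 < σt) (hμ : 0 < μ) (hγ : 0 < γ) (hρ : 0 < ρ)
    (hstat : (σ₁ + σ₂) * (1 - Real.cosh ρ) + σt * ρ * Real.sinh ρ = 0)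
    (c₁ : ℝ) (hc₁ : c₁ = (σ₂ - σ₁ * Real.cosh ρ) / Real.sinh ρ)
    (lam : ℕ → ℝ)
    (hlam : lam = fun (k : ℕ) => μ * (σ₂ * Real.cosh ρ - σ₁) * Real.sqrt (1 + (k : ℝ)^2)
        * (Real.cosh (ρ * Real.sqrt (1 + (k : ℝ)^2)) * Real.cosh (ρ * k) - 1)
        / (Real.sinh ρ * Real.sinh (ρ * Real.sqrt (1 + (k : ℝ)^2)) * Real.cosh (ρ * k))
      + (γ * (k : ℝ)^2 - μ * σt * ρ - μ * c₁) * (k : ℝ) * Real.tanh (ρ * k)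
      + μ * (σt - σ₂)) :
    lam 0 = μ * σt * (1 - ρ / Real.sinh ρ) ∧ 0 < lam 0 :=
  stmt_15_general σ₁ σ₂ σt μ γ ρ hσt hμ hρ hstat c₁ lam hlam
end

section
/- For fixed γ₀ > 0, the quotient λ_k(γ₀)/(k³·tanh(ρ*·k)) converges to γ₀ as the integer k tends to infinity; consequently there exists k₀ ∈ ℕ such that λ_k(γ₀) > 0 for all integers k > k₀. -/
/-!
Write `s = √(1 + k²)`. The first summand of `λ_k` is `μ(σ̄₂ cosh ρ* − σ̄₁)/sinh ρ* · s · Q_k` with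
`0 ≤ Q_k ≤ coth(ρ* s) ≤ 1 + 1/sinh ρ*`, so it is `O(k)` and `λ_k = γ k³ tanh(ρ* k) + O(k)`.
Since `tanh(ρ* k) → 1`, the quotient is `γ + O(1/k²)`.
-/

open Real Filter Topology Asymptotics

namespace Real

theorem tanh_pos {x : ℝ} (hx : 0 < x) : 0 < tanh x := by
  rw [tanh_eq_sinh_div_cosh]
  exact div_pos (sinh_pos_iff.2 hx) (cosh_pos x)

theorem tendsto_tanh_atTop : Tendsto tanh atTop (𝓝 1) := by
  have h_eq : ∀ x, tanh x = 1 - exp (-x) / cosh x := fun x => by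
    rw [tanh_eq_sinh_div_cosh, ← cosh_sub_sinh]
    field_simp [(cosh_pos x).ne']
    ring
  have h_zero : Tendsto (fun x => exp (-x) / cosh x) atTop (𝓝 0) :=
    squeeze_zero (fun x => by positivity)
      (fun x => div_le_self (exp_pos _).le (one_le_cosh x)) tendsto_exp_neg_atTop_nhds_zero
  rw [funext h_eq]
  simpa using (tendsto_const_nhds (x := (1 : ℝ))).sub h_zero

theorem cosh_le_sinh_add_one {x : ℝ} (hx : 0 ≤ x) : cosh x ≤ sinh x + 1 := by
  have h_diff := cosh_sub_sinh x
  have h_exp : exp (-x) ≤ 1 := exp_le_one_iff.2 (neg_nonpos.2 hx)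
  linarith

theorem cosh_mul_cosh_sub_one_div_le {a b : ℝ} (y : ℝ) (ha : 0 < a) (hab : a ≤ b) :
    (cosh b * cosh y - 1) / (sinh b * cosh y) ≤ 1 + 1 / sinh a := by
  have hsa : 0 < sinh a := sinh_pos_iff.2 ha
  have hsab : sinh a ≤ sinh b := sinh_le_sinh.2 hab
  have hsb : 0 < sinh b := hsa.trans_le hsab
  have hcy := cosh_pos y
  calc (cosh b * cosh y - 1) / (sinh b * cosh y)
      ≤ cosh b * cosh y / (sinh b * cosh y) := by gcongr; linarith
    _ = cosh b / sinh b := mul_div_mul_right _ _ hcy.ne'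
    _ ≤ (sinh b + 1) / sinh b := by gcongr; exact cosh_le_sinh_add_one (by linarith)
    _ = 1 + 1 / sinh b := by rw [add_div, div_self hsb.ne']
    _ ≤ 1 + 1 / sinh a := by gcongr

end Real

/-- The first summand of `λ_k`, with `p = μ(σ̄₂ cosh ρ* − σ̄₁)` and `k` replaced by a real `x`. -/
noncomputable def lamHead (ρ p x : ℝ) : ℝ :=
  p * √(1 + x ^ 2) * (cosh (ρ * √(1 + x ^ 2)) * cosh (ρ * x) - 1)
    / (sinh ρ * sinh (ρ * √(1 + x ^ 2)) * cosh (ρ * x))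

/-- `λ_k(γ)` at real `x = k`, with `C = μσ̃ρ* + μc₁` and `D = μ(σ̃ − σ̄₂)`. -/
noncomputable def lamFormula (ρ p C D γ x : ℝ) : ℝ :=
  lamHead ρ p x + (γ * x ^ 2 - C) * x * tanh (ρ * x) + D

theorem abs_lamHead_le (p : ℝ) {ρ x : ℝ} (hρ : 0 < ρ) (hx : 1 ≤ x) :
    |lamHead ρ p x| ≤ |p| / sinh ρ * (1 + 1 / sinh ρ) * 2 * x := by
  set s := √(1 + x ^ 2) with hs
  have hs_ge : 1 ≤ s := one_le_sqrt.2 (by nlinarith)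
  have hs_le : s ≤ 2 * x := (sqrt_le_left (by linarith)).2 (by nlinarith)
  have hsρ : 0 < sinh ρ := sinh_pos_iff.2 hρ
  set Q := (cosh (ρ * s) * cosh (ρ * x) - 1) / (sinh (ρ * s) * cosh (ρ * x))
  have hQ_nonneg : 0 ≤ Q := by
    have hρs : 0 < sinh (ρ * s) := sinh_pos_iff.2 (by positivity)
    have := one_le_cosh (ρ * s)
    have := one_le_cosh (ρ * x)
    exact div_nonneg (by nlinarith) (by positivity)
  have hQ_le : Q ≤ 1 + 1 / sinh ρ :=
    cosh_mul_cosh_sub_one_div_le _ hρ (le_mul_of_one_le_right hρ.le hs_ge)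
  have h_eq : lamHead ρ p x = p / sinh ρ * s * Q := by
    simp only [lamHead, Q, ← hs]
    field_simp
  rw [h_eq, abs_mul, abs_mul, abs_div, abs_of_pos hsρ, abs_of_pos (by linarith : 0 < s),
    abs_of_nonneg hQ_nonneg]
  calc |p| / sinh ρ * s * Q ≤ |p| / sinh ρ * (2 * x) * (1 + 1 / sinh ρ) := by gcongr
    _ = |p| / sinh ρ * (1 + 1 / sinh ρ) * 2 * x := by ring

theorem lamHead_isBigO (ρ p : ℝ) (hρ : 0 < ρ) : lamHead ρ p =O[atTop] fun x => x ^ 1 := by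
  refine IsBigO.of_bound (|p| / sinh ρ * (1 + 1 / sinh ρ) * 2) ?_
  filter_upwards [eventually_ge_atTop 1] with x hx
  rw [norm_eq_abs, norm_eq_abs, pow_one, abs_of_pos (by linarith : 0 < x)]
  exact abs_lamHead_le p hρ hx

theorem tendsto_lamFormula_div (ρ p C D γ : ℝ) (hρ : 0 < ρ) :
    Tendsto (fun x => lamFormula ρ p C D γ x / (x ^ 3 * tanh (ρ * x))) atTop (𝓝 γ) := by
  have h_head : Tendsto (fun x => lamHead ρ p x / x ^ 3) atTop (𝓝 0) :=
    ((lamHead_isBigO ρ p hρ).trans_isLittleO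
      (isLittleO_pow_pow_atTop_of_lt (by norm_num))).tendsto_div_nhds_zero
  have h_pow (c : ℝ) (n : ℕ) (hn : n ≠ 0) : Tendsto (fun x : ℝ => c / x ^ n) atTop (𝓝 0) :=
    tendsto_const_nhds.div_atTop (tendsto_pow_atTop hn)
  have h_tanh : Tendsto (fun x => tanh (ρ * x)) atTop (𝓝 1) :=
    tendsto_tanh_atTop.comp (tendsto_id.const_mul_atTop hρ)
  have h_lim : Tendsto (fun x => γ - C / x ^ 2 + (lamHead ρ p x / x ^ 3 + D / x ^ 3) / tanh (ρ * x))
      atTop (𝓝 γ) := by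
    simpa using (tendsto_const_nhds.sub (h_pow C 2 two_ne_zero)).add
      ((h_head.add (h_pow D 3 three_ne_zero)).div h_tanh one_ne_zero)
  refine h_lim.congr' ?_
  filter_upwards [eventually_gt_atTop 0] with x hx
  have h_tanh_ne : tanh (ρ * x) ≠ 0 := (tanh_pos (mul_pos hρ hx)).ne'
  rw [lamFormula]
  generalize tanh (ρ * x) = t at h_tanh_ne ⊢
  field_simp
  ring

theorem eventually_pos_of_tendsto_div {α : Type*} {l : Filter α} {f g : α → ℝ} {γ : ℝ}
    (hγ : 0 < γ) (h : Tendsto (fun a => f a / g a) l (𝓝 γ)) (hg : ∀ᶠ a in l, 0 < g a) :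
    ∀ᶠ a in l, 0 < f a := by
  filter_upwards [h.eventually (eventually_gt_nhds hγ), hg] with a h_div h_g
  exact (div_pos_iff_of_pos_right h_g).1 h_div

theorem stmt_16_general (σ₁ σ₂ σt μ ρ : ℝ)
    (hρ : 0 < ρ)
    (γ₀ : ℝ) (hγ₀ : 0 < γ₀)
    (c₁ : ℝ)
    (lam : ℕ → ℝ → ℝ)
    (hlam : lam = fun (k : ℕ) (γ : ℝ) =>
      μ * (σ₂ * Real.cosh ρ - σ₁) * Real.sqrt (1 + (k : ℝ)^2)
        * (Real.cosh (ρ * Real.sqrt (1 + (k : ℝ)^2)) * Real.cosh (ρ * k) - 1)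
        / (Real.sinh ρ * Real.sinh (ρ * Real.sqrt (1 + (k : ℝ)^2)) * Real.cosh (ρ * k))
      + (γ * (k : ℝ)^2 - μ * σt * ρ - μ * c₁) * (k : ℝ) * Real.tanh (ρ * k)
      + μ * (σt - σ₂)) :
    Tendsto (fun k : ℕ => lam k γ₀ / ((k : ℝ)^3 * Real.tanh (ρ * k))) atTop (nhds γ₀) ∧
    ∃ k₀ : ℕ, ∀ k : ℕ, k₀ < k → 0 < lam k γ₀ := by
  have hlam_eq (k : ℕ) : lam k γ₀ = lamFormula ρ (μ * (σ₂ * cosh ρ - σ₁))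
      (μ * σt * ρ + μ * c₁) (μ * (σt - σ₂)) γ₀ k := by
    subst hlam
    simp only [lamFormula, lamHead]
    ring
  have h_lim : Tendsto (fun k : ℕ => lam k γ₀ / ((k : ℝ) ^ 3 * tanh (ρ * k))) atTop (𝓝 γ₀) := by
    simpa only [Function.comp_def, hlam_eq] using
      (tendsto_lamFormula_div _ _ _ _ γ₀ hρ).comp tendsto_natCast_atTop_atTop
  have h_denom : ∀ᶠ k : ℕ in atTop, 0 < (k : ℝ) ^ 3 * tanh (ρ * k) := by
    filter_upwards [eventually_gt_atTop 0] with k hk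
    have hk' : (0 : ℝ) < k := Nat.cast_pos.2 hk
    exact mul_pos (by positivity) (tanh_pos (mul_pos hρ hk'))
  obtain ⟨k₀, hk₀⟩ := eventually_atTop.1 (eventually_pos_of_tendsto_div hγ₀ h_lim h_denom)
  exact ⟨h_lim, k₀, fun k hk => hk₀ k hk.le⟩

/-- for fixed γ₀ > 0, λ_k(γ₀)/(k³·tanh(ρ*·k)) → γ₀ as k → ∞;
consequently λ_k(γ₀) > 0 for all sufficiently large integers k. -/
theorem stmt_16 (σ₁ σ₂ σt μ ρ : ℝ)
    (hσ₁ : 0 < σ₁) (hσ₂ : 0 < σ₂) (hσt : 0 < σt) (hμ : 0 < μ) (hρ : 0 < ρ)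
    (γ₀ : ℝ) (hγ₀ : 0 < γ₀)
    (c₁ : ℝ) (hc₁ : c₁ = (σ₂ - σ₁ * Real.cosh ρ) / Real.sinh ρ)
    (lam : ℕ → ℝ → ℝ)
    (hlam : lam = fun (k : ℕ) (γ : ℝ) =>
      μ * (σ₂ * Real.cosh ρ - σ₁) * Real.sqrt (1 + (k : ℝ)^2)
        * (Real.cosh (ρ * Real.sqrt (1 + (k : ℝ)^2)) * Real.cosh (ρ * k) - 1)
        / (Real.sinh ρ * Real.sinh (ρ * Real.sqrt (1 + (k : ℝ)^2)) * Real.cosh (ρ * k))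
      + (γ * (k : ℝ)^2 - μ * σt * ρ - μ * c₁) * (k : ℝ) * Real.tanh (ρ * k)
      + μ * (σt - σ₂)) :
    Tendsto (fun k : ℕ => lam k γ₀ / ((k : ℝ)^3 * Real.tanh (ρ * k))) atTop (nhds γ₀) ∧
    ∃ k₀ : ℕ, ∀ k : ℕ, k₀ < k → 0 < lam k γ₀ :=
  stmt_16_general σ₁ σ₂ σt μ ρ hρ γ₀ hγ₀ c₁ lam hlam
end

section
/- If σ̄₁ > σ̃ > 0 and σ̄₂ > σ̃, then α := (σ̄₁ + σ̄₂)/σ̃ > 2, and any ρ* > 0 with α·(1 − cosh ρ*) + ρ*·sinh ρ* = 0 satisfies σ̄₂·cosh ρ* − σ̄₁ > 0. -/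
open Real

/-
The root equation says `α (cosh ρ - 1) = ρ sinh ρ`, and `ρ < sinh ρ` turns this into
`α (cosh ρ - 1) < sinh² ρ = (cosh ρ - 1)(cosh ρ + 1)`, so `α < cosh ρ + 1`. Then
`σ₂ cosh ρ - σ₁ > σ₂ (α - 1) - σ₁ = α (σ₂ - σ̃) > 0`, using `α σ̃ = σ₁ + σ₂`.
-/

lemma lt_cosh_add_one_of_mul_one_sub_cosh_add_mul_sinh_eq_zero {α ρ : ℝ} (hρ : 0 < ρ)
    (h : α * (1 - cosh ρ) + ρ * sinh ρ = 0) : α < cosh ρ + 1 := by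
  have hcosh : 0 < cosh ρ - 1 := sub_pos.mpr (one_lt_cosh.mpr hρ.ne')
  have hsinh : ρ * sinh ρ < sinh ρ * sinh ρ :=
    mul_lt_mul_of_pos_right (self_lt_sinh_iff.mpr hρ) (sinh_pos_iff.mpr hρ)
  refine lt_of_mul_lt_mul_left (a := cosh ρ - 1) ?_ hcosh.le
  calc (cosh ρ - 1) * α = ρ * sinh ρ := by linarith
    _ < sinh ρ * sinh ρ := hsinh
    _ = (cosh ρ - 1) * (cosh ρ + 1) := by nlinarith [cosh_sq_sub_sinh_sq ρ]

theorem stmt_19_general (σ₁ σ₂ σt : ℝ) (hσt : 0 < σt)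
    (h₁ : σt < σ₁) (h₂ : σt < σ₂)
    (α : ℝ) (hα : α = (σ₁ + σ₂) / σt) :
    2 < α ∧ ∀ ρ : ℝ, 0 < ρ → α * (1 - Real.cosh ρ) + ρ * Real.sinh ρ = 0 →
      0 < σ₂ * Real.cosh ρ - σ₁ := by
  have hασt : α * σt = σ₁ + σ₂ := by rw [hα, div_mul_cancel₀ _ hσt.ne']
  have hα₂ : 2 < α := by
    rw [hα, lt_div_iff₀ hσt]
    linarith
  refine ⟨hα₂, fun ρ hρ h => ?_⟩
  have hcosh := lt_cosh_add_one_of_mul_one_sub_cosh_add_mul_sinh_eq_zero hρ h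
  calc 0 < α * (σ₂ - σt) := mul_pos (by linarith) (sub_pos.mpr h₂)
    _ = σ₂ * (α - 1) - σ₁ := by linarith
    _ < σ₂ * cosh ρ - σ₁ := by gcongr <;> linarith

/-- if σ̄₁ > σ̃ > 0 and σ̄₂ > σ̃, then α := (σ̄₁ + σ̄₂)/σ̃ > 2,
and any ρ* > 0 with α·(1 − cosh ρ*) + ρ*·sinh ρ* = 0 satisfies
σ̄₂·cosh ρ* − σ̄₁ > 0. -/
theorem stmt_19 (σ₁ σ₂ σt : ℝ) (hσ₁ : 0 < σ₁) (hσ₂ : 0 < σ₂) (hσt : 0 < σt)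
    (h₁ : σt < σ₁) (h₂ : σt < σ₂)
    (α : ℝ) (hα : α = (σ₁ + σ₂) / σt) :
    2 < α ∧ ∀ ρ : ℝ, 0 < ρ → α * (1 - Real.cosh ρ) + ρ * Real.sinh ρ = 0 →
      0 < σ₂ * Real.cosh ρ - σ₁ :=
  stmt_19_general σ₁ σ₂ σt hσt h₁ h₂ α hα
end
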